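/- Let X_1, …, X_n be distinct points in (0,∞) and let f̂_n be the Grenander estimator computed from these points. Then for every function h : ℝ → ℝ, ∫₀^∞ h(f̂_n(x)) f̂_n(x) dx = n^{-1} ∑_{i=1}^n h(f̂_n(X_i)); that is, the plug-in estimator ∫ h(f̂_n) d P̂_n equals the empirical-measure estimator ∫ h(f̂_n) d ℙ_n, where P̂_n is the measure with density f̂_n and ℙ_n is the empirical measure of X_1, …, X_n. -/

import Mathlib

/-!
On `[0, ∞)` the least concave majorant of the empirical distribution function `𝔽ₙ` is the upper
convex hull of `(0, 0)` and the points `(Xᵢ, 𝔽ₙ(Xᵢ))`. Its vertices `0 = τ₀ ≤ τ₁ ≤ ⋯` are found by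
gift wrapping: `τₖ₊₁` is a data point right of `τₖ` maximizing the slope of the chord of `𝔽ₙ` from
`τₖ`. Hence `f̂ₙ` equals the chord slope `sₖ` on `(τₖ, τₖ₊₁]` and vanishes right of the largest
data point. As `sₖ (τₖ₊₁ - τₖ) = 𝔽ₙ(τₖ₊₁) - 𝔽ₙ(τₖ)` is `1/n` times the number of data points in
`(τₖ, τₖ₊₁]`, both sides of the identity equal `∑ₖ h(sₖ) (𝔽ₙ(τₖ₊₁) - 𝔽ₙ(τₖ))`.
-/

open MeasureTheory ProbabilityTheory Filter Topology Set

noncomputable section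

/-- Empirical distribution function of the first `n` observations `X 0, …, X (n-1)`. -/
def empCDF (X : ℕ → ℝ) (n : ℕ) (x : ℝ) : ℝ :=
  (n : ℝ)⁻¹ * ∑ i ∈ Finset.range n, if X i ≤ x then (1 : ℝ) else 0

/-- Least concave majorant operator over a set `T`: the pointwise infimum over all
bounded concave functions on `T` that dominate `ξ` on `T`. -/
def lcmOn (T : Set ℝ) (ξ : ℝ → ℝ) (x : ℝ) : ℝ :=
  sInf {y : ℝ | ∃ η : ℝ → ℝ, ConcaveOn ℝ T η ∧ (∃ C, ∀ z ∈ T, |η z| ≤ C) ∧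
      (∀ z ∈ T, ξ z ≤ η z) ∧ η x = y}

/-- The least concave majorant of the empirical CDF on `[0,∞)`. -/
def lcmCDF (X : ℕ → ℝ) (n : ℕ) : ℝ → ℝ := lcmOn (Ici 0) (empCDF X n)

/-- Grenander estimator: left-hand derivative of the LCM of the empirical CDF. -/
def grenander (X : ℕ → ℝ) (n : ℕ) (x : ℝ) : ℝ :=
  derivWithin (lcmCDF X n) (Iio x) x

/-- `TFx F x`: the set `{x}` together with the union of all open intervals contained in
`[0,∞)`, containing `x`, on which `F` is affine. -/
def TFx (F : ℝ → ℝ) (x : ℝ) : Set ℝ :=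
  {x} ∪ ⋃₀ {A : Set ℝ | (∃ u v : ℝ, A = Ioo u v) ∧ A ⊆ Ici 0 ∧ x ∈ A ∧
      ∃ a b : ℝ, ∀ z ∈ A, F z = a * z + b}

/-- Hadamard directional derivative of the LCM operator at the concave function `F`:
`(M'_F ξ)(x) = M_{T_{F,x}} ξ (x)`. -/
def lcmDeriv (F : ℝ → ℝ) (ξ : ℝ → ℝ) (x : ℝ) : ℝ := lcmOn (TFx F x) ξ x

/-- `IsLSIntegralOn ψ φ s I` : `I` is the Lebesgue–Stieltjes integral `∫_s φ d[ψ]` of `φ`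
against the finite-total-variation function `ψ`, over the set `s`; the signed
Lebesgue–Stieltjes measure induced by `ψ` is represented as a difference `ν₁ - ν₂` of
finite measures carried by `s` whose difference of `Ioc`-increments matches those of `ψ`. -/
def IsLSIntegralOn (ψ φ : ℝ → ℝ) (s : Set ℝ) (I : ℝ) : Prop :=
  ∃ ν₁ ν₂ : Measure ℝ, IsFiniteMeasure ν₁ ∧ IsFiniteMeasure ν₂ ∧
    ν₁ sᶜ = 0 ∧ ν₂ sᶜ = 0 ∧
    (∀ a b : ℝ, a ∈ s → b ∈ s → a ≤ b →
      (ν₁ (Ioc a b)).toReal - (ν₂ (Ioc a b)).toReal = ψ b - ψ a) ∧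
    Integrable φ ν₁ ∧ Integrable φ ν₂ ∧
    I = (∫ x, φ x ∂ν₁) - ∫ x, φ x ∂ν₂

/-- A Brownian bridge on `[0,1]`: a centered Gaussian process with a.s. continuous paths and
covariance `min s t - s t` (every finite linear combination is a centered Gaussian). -/
def IsBrownianBridge {Ω : Type*} [MeasurableSpace Ω] (P : Measure Ω)
    (B : ℝ → Ω → ℝ) : Prop :=
  (∀ t, Measurable (B t)) ∧
  (∀ᵐ ω ∂P, ContinuousOn (fun t => B t ω) (Icc 0 1)) ∧
  ∀ (m : ℕ) (t c : Fin m → ℝ), (∀ i, t i ∈ Icc (0 : ℝ) 1) →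
    Measure.map (fun ω => ∑ i, c i * B (t i) ω) P =
      gaussianReal 0 (∑ i, ∑ j, c i * c j * (min (t i) (t j) - t i * t j)).toNNReal

/-- A standard Brownian motion on `[0,1]`: a centered Gaussian process with a.s. continuous
paths and covariance `min s t`. -/
def IsBrownianMotion {Ω : Type*} [MeasurableSpace Ω] (P : Measure Ω)
    (W : ℝ → Ω → ℝ) : Prop :=
  (∀ t, Measurable (W t)) ∧
  (∀ᵐ ω ∂P, ContinuousOn (fun t => W t ω) (Icc 0 1)) ∧
  ∀ (m : ℕ) (t c : Fin m → ℝ), (∀ i, t i ∈ Icc (0 : ℝ) 1) →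
    Measure.map (fun ω => ∑ i, c i * W (t i) ω) P =
      gaussianReal 0 (∑ i, ∑ j, c i * c j * min (t i) (t j)).toNNReal

/-- Convergence in distribution of real random variables to a limiting random variable. -/
def TendstoInDistribution {Ω Ω' : Type*} [MeasurableSpace Ω] [MeasurableSpace Ω']
    (P : Measure Ω) (Z : ℕ → Ω → ℝ) (P' : Measure Ω') (Y : Ω' → ℝ) : Prop :=
  ∀ φ : BoundedContinuousFunction ℝ ℝ,
    Tendsto (fun n => ∫ ω, φ (Z n ω) ∂P) atTop (𝓝 (∫ ω, φ (Y ω) ∂P'))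

/-- Convergence in distribution towards a limiting law on `ℝ`. -/
def TendstoInLaw {Ω : Type*} [MeasurableSpace Ω]
    (P : Measure Ω) (Z : ℕ → Ω → ℝ) (ν : Measure ℝ) : Prop :=
  ∀ φ : BoundedContinuousFunction ℝ ℝ,
    Tendsto (fun n => ∫ ω, φ (Z n ω) ∂P) atTop (𝓝 (∫ x, φ x ∂ν))

/-- Convergence to zero in probability. -/
def TendstoInProbabilityZero {Ω : Type*} [MeasurableSpace Ω]
    (P : Measure Ω) (Z : ℕ → Ω → ℝ) : Prop :=
  ∀ ε : ℝ, 0 < ε → Tendsto (fun n => P {ω | ε ≤ |Z n ω|}) atTop (𝓝 0)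

/-- The sequence `X` is i.i.d. with common law `μ`. -/
def IsIIDWithLaw {Ω : Type*} [MeasurableSpace Ω] (P : Measure Ω)
    (X : ℕ → Ω → ℝ) (μ : Measure ℝ) : Prop :=
  (∀ i, Measurable (X i)) ∧ (∀ i, Measure.map (X i) P = μ) ∧
    iIndepFun X P

lemma exists_mem_Ico_of_le_of_lt {α : Type*} [LinearOrder α] {τ : ℕ → α} {N : ℕ} {x : α}
    (h0 : τ 0 ≤ x) (hN : x < τ N) : ∃ k < N, x ∈ Ico (τ k) (τ (k + 1)) := by
  classical
  have hex : ∃ m, x < τ m := ⟨N, hN⟩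
  obtain ⟨k, hk⟩ : ∃ k, Nat.find hex = k + 1 :=
    Nat.exists_eq_succ_of_ne_zero fun h => (Nat.find_spec hex).not_ge (h ▸ h0)
  refine ⟨k, by have := Nat.find_min' hex hN; omega, ?_, hk ▸ Nat.find_spec hex⟩
  exact not_lt.1 (Nat.find_min hex (by omega))

lemma sum_indicator_Ioc_eq_indicator {M : Type*} [AddCommMonoid M] {τ : ℕ → ℝ}
    (hτ : Monotone τ) {N : ℕ} {Φ : ℝ → M} {a : ℕ → M}
    (hpiece : ∀ k < N, EqOn Φ (fun _ => a k) (Ioc (τ k) (τ (k + 1)))) (x : ℝ) :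
    ∑ k ∈ Finset.range N, (Ioc (τ k) (τ (k + 1))).indicator (fun _ => a k) x =
      (Ioc (τ 0) (τ N)).indicator Φ x := by
  induction N with
  | zero => simp
  | succ N ih =>
    rw [Finset.sum_range_succ, ih fun k hk => hpiece k (by omega),
      ← Ioc_union_Ioc_eq_Ioc (hτ (Nat.zero_le N)) (hτ N.le_succ),
      indicator_union_of_disjoint (Ioc_disjoint_Ioc_of_le le_rfl),
      indicator_congr fun y hy => (hpiece N N.lt_succ_self hy).symm]

lemma derivWithin_Iio_eq_of_eqOn {f g : ℝ → ℝ} {a x m : ℝ} (hax : a < x)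
    (hfg : EqOn f g (Ioc a x)) (hg : HasDerivAt g m x) : derivWithin f (Iio x) x = m := by
  have hev : f =ᶠ[𝓝[Iio x] x] g := by
    filter_upwards [mem_nhdsWithin_of_mem_nhds (Ioi_mem_nhds hax), self_mem_nhdsWithin]
      with y hay hyx
    exact hfg ⟨hay, le_of_lt hyx⟩
  rw [hev.derivWithin_eq (hfg ⟨hax, le_rfl⟩)]
  exact hg.hasDerivWithinAt.derivWithin (uniqueDiffWithinAt_Iio x)

lemma slope_le_slope_of_slope_le {f : ℝ → ℝ} {a b c : ℝ} (hab : a < b) (hbc : b < c)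
    (h : slope f a c ≤ slope f a b) : slope f b c ≤ slope f a b := by
  rw [← sub_div_sub_smul_slope_add_sub_div_sub_smul_slope f a b c, smul_eq_mul,
    smul_eq_mul] at h
  have hca : 0 < c - a := by linarith
  have hw : (b - a) / (c - a) = 1 - (c - b) / (c - a) := by field_simp; ring
  rw [hw] at h
  have ht : 0 < (c - b) / (c - a) := div_pos (by linarith) hca
  have : (c - b) / (c - a) * (slope f b c - slope f a b) ≤ 0 := by linarith
  exact sub_nonpos.1 (nonpos_of_mul_nonpos_right this ht)

lemma ConcaveOn.add_slope_mul_le {f η : ℝ → ℝ} {s : Set ℝ} (hη : ConcaveOn ℝ s η) {a b x : ℝ}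
    (ha : a ∈ s) (hb : b ∈ s) (hfa : f a ≤ η a) (hfb : f b ≤ η b) (hx : x ∈ Icc a b) :
    f a + slope f a b * (x - a) ≤ η x := by
  obtain rfl | hab := (hx.1.trans hx.2).eq_or_lt
  · obtain rfl : x = a := le_antisymm hx.2 hx.1
    simpa using hfa
  set t := (x - a) / (b - a)
  have hba : 0 < b - a := sub_pos.2 hab
  have ht0 : 0 ≤ t := div_nonneg (sub_nonneg.2 hx.1) hba.le
  have ht1 : 1 - t = (b - x) / (b - a) := by simp only [t]; field_simp; ring
  have hconc := hη.2 ha hb (by rw [ht1]; exact div_nonneg (sub_nonneg.2 hx.2) hba.le) ht0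
    (sub_add_cancel 1 t)
  have hxt : (1 - t) • a + t • b = x := by simp only [smul_eq_mul, ht1, t]; field_simp; ring
  have hft : f a + slope f a b * (x - a) = (1 - t) * f a + t * f b := by
    rw [slope_def_field]; simp only [t]; field_simp; ring
  rw [hxt, smul_eq_mul, smul_eq_mul] at hconc
  rw [hft]
  nlinarith [mul_le_mul_of_nonneg_left hfb ht0, ht1 ▸ div_nonneg (sub_nonneg.2 hx.2) hba.le]

lemma ConcaveOn.finset_inf' {𝕜 E β ι : Type*} [Semiring 𝕜] [PartialOrder 𝕜] [AddCommMonoid E]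
    [AddCommMonoid β] [LinearOrder β] [IsOrderedAddMonoid β] [SMul 𝕜 E] [Module 𝕜 β]
    [PosSMulMono 𝕜 β] {s : Set E} {t : Finset ι} (ht : t.Nonempty) {f : ι → E → β}
    (hf : ∀ i ∈ t, ConcaveOn 𝕜 s (f i)) : ConcaveOn 𝕜 s (fun x => t.inf' ht (f · x)) := by
  obtain ⟨i₀, hi₀⟩ := ht
  refine ⟨(hf i₀ hi₀).1, fun x hx y hy a b ha hb hab => Finset.le_inf' _ _ fun i hi => ?_⟩
  calc a • t.inf' ⟨i₀, hi₀⟩ (f · x) + b • t.inf' ⟨i₀, hi₀⟩ (f · y) ≤ a • f i x + b • f i y := by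
        gcongr <;> exact Finset.inf'_le _ hi
    _ ≤ f i (a • x + b • y) := (hf i hi).2 hx hy ha hb hab

lemma integral_Ioi_eq_sum_of_eqOn_Ioc {τ : ℕ → ℝ} (hτ : Monotone τ) {N : ℕ} {Φ : ℝ → ℝ}
    {a : ℕ → ℝ} (hpiece : ∀ k < N, EqOn Φ (fun _ => a k) (Ioc (τ k) (τ (k + 1))))
    (hzero : EqOn Φ 0 (Ioi (τ N))) :
    ∫ x in Ioi (τ 0), Φ x = ∑ k ∈ Finset.range N, (τ (k + 1) - τ k) * a k := by
  have hΦ : EqOn Φ (fun x => ∑ k ∈ Finset.range N,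
      (Ioc (τ k) (τ (k + 1))).indicator (fun _ => a k) x) (Ioi (τ 0)) := by
    intro x hx
    dsimp only
    rw [sum_indicator_Ioc_eq_indicator hτ hpiece]
    by_cases hxN : x ≤ τ N
    · exact (indicator_of_mem (show x ∈ Ioc (τ 0) (τ N) from ⟨hx, hxN⟩) Φ).symm
    · rw [indicator_of_notMem fun h => hxN h.2]
      exact hzero (not_le.1 hxN)
  rw [setIntegral_congr_fun measurableSet_Ioi hΦ,
    integral_finsetSum _ fun k _ => (integrable_indicator_iff measurableSet_Ioc).2
      (integrableOn_const
      ((Measure.restrict_apply_le _ _).trans_lt measure_Ioc_lt_top).ne)]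
  refine Finset.sum_congr rfl fun k _ => ?_
  have hsub : Ioc (τ k) (τ (k + 1)) ⊆ Ioi (τ 0) := fun y hy => (hτ (Nat.zero_le k)).trans_lt hy.1
  rw [integral_indicator_const _ measurableSet_Ioc, measureReal_restrict_apply measurableSet_Ioc,
    inter_eq_left.2 hsub, Real.volume_real_Ioc_of_le (hτ k.le_succ), smul_eq_mul]

section UpperHull

variable (F : ℝ → ℝ) (P : Finset ℝ)

def hullNext (a : ℝ) : ℝ :=
  if h : (P.filter (a < ·)).Nonempty then (Finset.exists_max_image _ (slope F a) h).choose else a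

def hullVertex (k : ℕ) : ℝ := (hullNext F P)^[k] 0

def hullSlope (k : ℕ) : ℝ := slope F (hullVertex F P k) (hullVertex F P (k + 1))

def hullChord (k : ℕ) (x : ℝ) : ℝ :=
  F (hullVertex F P k) + hullSlope F P k * (x - hullVertex F P k)

def upperHull (x : ℝ) : ℝ :=
  (Finset.range (P.card + 1)).inf' Finset.nonempty_range_add_one (hullChord F P · x)

variable {F P}

lemma hullNext_spec {a u : ℝ} (hu : u ∈ P) (hau : a < u) :
    hullNext F P a ∈ P ∧ a < hullNext F P a ∧
      ∀ v ∈ P, a < v → slope F a v ≤ slope F a (hullNext F P a) := by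
  have h : (P.filter (a < ·)).Nonempty := ⟨u, Finset.mem_filter.2 ⟨hu, hau⟩⟩
  obtain ⟨hmem, hmax⟩ := (Finset.exists_max_image _ (slope F a) h).choose_spec
  rw [hullNext, dif_pos h]
  exact ⟨(Finset.mem_filter.1 hmem).1, (Finset.mem_filter.1 hmem).2,
    fun v hv hav => hmax v (Finset.mem_filter.2 ⟨hv, hav⟩)⟩

lemma hullNext_eq_self {a : ℝ} (h : ∀ u ∈ P, u ≤ a) : hullNext F P a = a := by
  rw [hullNext, dif_neg]
  rintro ⟨u, hu⟩
  exact (Finset.mem_filter.1 hu).2.not_ge (h u (Finset.mem_filter.1 hu).1)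

lemma le_hullNext (a : ℝ) : a ≤ hullNext F P a := by
  by_cases h : ∃ u ∈ P, a < u
  · obtain ⟨u, hu, hau⟩ := h
    exact (hullNext_spec hu hau).2.1.le
  · push Not at h
    exact (hullNext_eq_self h).ge

lemma hullVertex_succ (k : ℕ) : hullVertex F P (k + 1) = hullNext F P (hullVertex F P k) :=
  Function.iterate_succ_apply' _ _ _

lemma monotone_hullVertex : Monotone (hullVertex F P) :=
  monotone_nat_of_le_succ fun k => by rw [hullVertex_succ]; exact le_hullNext _

lemma hullVertex_nonneg (k : ℕ) : 0 ≤ hullVertex F P k := monotone_hullVertex k.zero_le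

lemma card_filter_lt_hullVertex_le (k : ℕ) :
    (P.filter (hullVertex F P k < ·)).card ≤ P.card - k := by
  induction k with
  | zero => simpa using Finset.card_filter_le _ _
  | succ k ih =>
    by_cases h : ∃ u ∈ P, hullVertex F P k < u
    · obtain ⟨u, hu, hku⟩ := h
      obtain ⟨hmem, hlt, -⟩ := hullNext_spec (F := F) hu hku
      rw [← hullVertex_succ] at hmem hlt
      have hssub : P.filter (hullVertex F P (k + 1) < ·) ⊂ P.filter (hullVertex F P k < ·) := by
        refine (Finset.ssubset_iff_of_subset fun v hv => ?_).2
          ⟨_, Finset.mem_filter.2 ⟨hmem, hlt⟩, fun hv => (Finset.mem_filter.1 hv).2.false⟩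
        rw [Finset.mem_filter] at hv ⊢
        exact ⟨hv.1, hlt.trans hv.2⟩
      have := Finset.card_lt_card hssub
      omega
    · push Not at h
      rw [hullVertex_succ, hullNext_eq_self h, Finset.card_eq_zero.2]
      · exact Nat.zero_le _
      · exact Finset.filter_eq_empty_iff.2 fun u hu => not_lt.2 (h u hu)

lemma le_hullVertex_card {p : ℝ} (hp : p ∈ P) : p ≤ hullVertex F P P.card := by
  by_contra! h
  have := card_filter_lt_hullVertex_le (F := F) (P := P) P.card
  rw [Nat.sub_self, Nat.le_zero, Finset.card_eq_zero] at this
  exact Finset.notMem_empty p (this ▸ Finset.mem_filter.2 ⟨hp, h⟩)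

lemma hullSlope_card : hullSlope F P P.card = 0 := by
  rw [hullSlope, hullVertex_succ, hullNext_eq_self fun _ => le_hullVertex_card, slope_same]

lemma hullVertex_succ_mem {k : ℕ} (h : hullVertex F P k < hullVertex F P (k + 1)) :
    hullVertex F P (k + 1) ∈ P := by
  by_cases hu : ∃ u ∈ P, hullVertex F P k < u
  · obtain ⟨u, hu, hku⟩ := hu
    rw [hullVertex_succ]
    exact (hullNext_spec hu hku).1
  · push Not at hu
    rw [hullVertex_succ, hullNext_eq_self hu] at h
    exact (lt_irrefl _ h).elim

lemma slope_le_hullSlope {k : ℕ} {u : ℝ} (hu : u ∈ P) (hku : hullVertex F P k < u) :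
    slope F (hullVertex F P k) u ≤ hullSlope F P k := by
  rw [hullSlope, hullVertex_succ]
  exact (hullNext_spec hu hku).2.2 u hu hku

lemma sub_mul_hullSlope (k : ℕ) :
    (hullVertex F P (k + 1) - hullVertex F P k) * hullSlope F P k =
      F (hullVertex F P (k + 1)) - F (hullVertex F P k) := by
  rw [hullSlope, ← smul_eq_mul, sub_smul_slope, vsub_eq_sub]

lemma hullChord_hullVertex_succ (k : ℕ) :
    hullChord F P k (hullVertex F P (k + 1)) = F (hullVertex F P (k + 1)) := by
  rw [hullChord, mul_comm, sub_mul_hullSlope]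
  ring

lemma hullChord_sub_hullChord_succ (k : ℕ) (x : ℝ) :
    hullChord F P k x - hullChord F P (k + 1) x =
      (hullSlope F P k - hullSlope F P (k + 1)) * (x - hullVertex F P (k + 1)) := by
  have h := hullChord_hullVertex_succ (F := F) (P := P) k
  simp only [hullChord] at h ⊢
  linear_combination h

lemma hasDerivAt_hullChord (k : ℕ) (x : ℝ) :
    HasDerivAt (hullChord F P k) (hullSlope F P k) x := by
  have h := (((hasDerivAt_id x).sub_const (hullVertex F P k)).const_mul
    (hullSlope F P k)).const_add (F (hullVertex F P k))
  rwa [mul_one] at h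

lemma hullChord_card (x : ℝ) : hullChord F P P.card x = F (hullVertex F P P.card) := by
  simp [hullChord, hullSlope_card]

lemma concaveOn_upperHull : ConcaveOn ℝ univ (upperHull F P) :=
  ConcaveOn.finset_inf' _ fun k _ => ⟨convex_univ, fun x _ y _ a b _ _ hab => le_of_eq <| by
    simp only [hullChord, smul_eq_mul]
    linear_combination (F (hullVertex F P k) - hullSlope F P k * hullVertex F P k) * hab⟩

lemma upperHull_le_hullChord {k : ℕ} (hk : k ≤ P.card) (x : ℝ) :
    upperHull F P x ≤ hullChord F P k x :=
  Finset.inf'_le _ (Finset.mem_range_succ_iff.2 hk)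

lemma hullSlope_nonneg (hF : Monotone F) (k : ℕ) : 0 ≤ hullSlope F P k :=
  (hF.monotoneOn univ).slope_nonneg trivial trivial

lemma hullSlope_succ_le (hF : Monotone F) (k : ℕ) :
    hullSlope F P (k + 1) ≤ hullSlope F P k := by
  rcases (monotone_hullVertex (F := F) (P := P) (k + 1).le_succ).eq_or_lt with h | h
  · rw [hullSlope, ← h, slope_same]
    exact hullSlope_nonneg hF k
  have hk : hullVertex F P k < hullVertex F P (k + 1) := by
    refine (monotone_hullVertex k.le_succ).lt_of_ne fun hk => h.ne ?_
    rw [hullVertex_succ (k + 1), ← hk, ← hullVertex_succ, hk]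
  exact slope_le_slope_of_slope_le hk h (slope_le_hullSlope (hullVertex_succ_mem h) (hk.trans h))

lemma hullChord_le_of_le_left (hF : Monotone F) {j k : ℕ} (hjk : j ≤ k) {x : ℝ}
    (hx : hullVertex F P k ≤ x) : hullChord F P k x ≤ hullChord F P j x := by
  induction k, hjk using Nat.le_induction with
  | base => rfl
  | succ k _ ih =>
    refine le_trans ?_ (ih ((monotone_hullVertex k.le_succ).trans hx))
    have hsub := hullChord_sub_hullChord_succ (F := F) (P := P) k x
    nlinarith [hullSlope_succ_le (P := P) hF k]

lemma hullChord_le_of_le_right (hF : Monotone F) {j k : ℕ} (hkj : k ≤ j) {x : ℝ}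
    (hx : x ≤ hullVertex F P (k + 1)) : hullChord F P k x ≤ hullChord F P j x := by
  induction j, hkj using Nat.le_induction with
  | base => rfl
  | succ j hkj ih =>
    refine ih.trans ?_
    have hxj : x ≤ hullVertex F P (j + 1) := hx.trans (monotone_hullVertex (by omega))
    have hsub := hullChord_sub_hullChord_succ (F := F) (P := P) j x
    nlinarith [hullSlope_succ_le (P := P) hF j]

lemma upperHull_eq_hullChord (hF : Monotone F) {k : ℕ} (hk : k ≤ P.card) {x : ℝ}
    (hx : x ∈ Icc (hullVertex F P k) (hullVertex F P (k + 1))) :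
    upperHull F P x = hullChord F P k x :=
  le_antisymm (upperHull_le_hullChord hk x) <| Finset.le_inf' _ _ fun j _ =>
    (le_total j k).elim (fun hjk => hullChord_le_of_le_left hF hjk hx.1)
      (fun hkj => hullChord_le_of_le_right hF hkj hx.2)

lemma upperHull_eq_of_hullVertex_card_le (hF : Monotone F) {x : ℝ}
    (hx : hullVertex F P P.card ≤ x) : upperHull F P x = F (hullVertex F P P.card) := by
  rw [← hullChord_card (F := F) (P := P) x]
  exact le_antisymm (upperHull_le_hullChord le_rfl x) <| Finset.le_inf' _ _ fun j hj =>
    hullChord_le_of_le_left hF (Finset.mem_range_succ_iff.1 hj) hx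

end UpperHull

def JumpsOnlyAt (F : ℝ → ℝ) (P : Finset ℝ) : Prop :=
  ∀ a b, a ≤ b → (∀ p ∈ P, p ∉ Ioc a b) → F b = F a

section JumpsOnlyAt

variable {F : ℝ → ℝ} {P : Finset ℝ}

lemma eq_of_hullVertex_card_le (hjump : JumpsOnlyAt F P) {x : ℝ}
    (hx : hullVertex F P P.card ≤ x) : F x = F (hullVertex F P P.card) :=
  hjump _ _ hx fun _ hp hpI => hpI.1.not_ge (le_hullVertex_card hp)

lemma le_hullChord (hF : Monotone F) (hjump : JumpsOnlyAt F P) {k : ℕ} {x : ℝ}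
    (hx : hullVertex F P k ≤ x) : F x ≤ hullChord F P k x := by
  set τ := hullVertex F P k
  have hs := hullSlope_nonneg (P := P) hF k
  by_cases hP : ∃ p ∈ P, p ∈ Ioc τ x
  · -- `F x = F w` for the last point `w` of `P` in `(τ, x]`, and `w` lies below the chord
    obtain ⟨w, hw, hwmax⟩ := Finset.exists_max_image (P.filter (· ∈ Ioc τ x)) id
      (by simpa [Finset.Nonempty] using hP)
    obtain ⟨hwP, hwI⟩ := Finset.mem_filter.1 hw
    have hFx : F x = F w := hjump w x hwI.2 fun p hp hpI =>
      hpI.1.not_ge (hwmax p (Finset.mem_filter.2 ⟨hp, hwI.1.trans hpI.1, hpI.2⟩))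
    have hFw : F w = F τ + (w - τ) * slope F τ w := by
      rw [← smul_eq_mul, sub_smul_slope, vsub_eq_sub]; ring
    have hslope := slope_le_hullSlope hwP hwI.1
    rw [hFx, hFw, hullChord]
    nlinarith [hwI.1, hwI.2]
  · push Not at hP
    rw [hjump τ x hx hP, hullChord]
    nlinarith

lemma le_upperHull (hF : Monotone F) (hjump : JumpsOnlyAt F P) {x : ℝ} (hx : 0 ≤ x) :
    F x ≤ upperHull F P x := by
  rcases lt_or_ge x (hullVertex F P P.card) with h | h
  · obtain ⟨k, hk, hkx⟩ := exists_mem_Ico_of_le_of_lt (τ := hullVertex F P) hx h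
    rw [upperHull_eq_hullChord hF hk.le (Ico_subset_Icc_self hkx)]
    exact le_hullChord hF hjump hkx.1
  · rw [upperHull_eq_of_hullVertex_card_le hF h, eq_of_hullVertex_card_le hjump h]

lemma upperHull_le_of_concaveOn (hF : Monotone F) (hjump : JumpsOnlyAt F P) {η : ℝ → ℝ}
    (hη : ConcaveOn ℝ (Ici 0) η) (hFη : ∀ z ∈ Ici 0, F z ≤ η z) {x : ℝ} (hx : 0 ≤ x) :
    upperHull F P x ≤ η x := by
  rcases lt_or_ge x (hullVertex F P P.card) with h | h
  · obtain ⟨k, hk, hkx⟩ := exists_mem_Ico_of_le_of_lt (τ := hullVertex F P) hx h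
    rw [upperHull_eq_hullChord hF hk.le (Ico_subset_Icc_self hkx)]
    exact hη.add_slope_mul_le (hullVertex_nonneg k) (hullVertex_nonneg (k + 1))
      (hFη _ (hullVertex_nonneg k)) (hFη _ (hullVertex_nonneg (k + 1))) (Ico_subset_Icc_self hkx)
  · rw [upperHull_eq_of_hullVertex_card_le hF h, ← eq_of_hullVertex_card_le hjump h]
    exact hFη x hx

lemma lcmOn_Ici_eq_upperHull (hF : Monotone F) (hjump : JumpsOnlyAt F P) {x : ℝ} (hx : 0 ≤ x) :
    lcmOn (Ici 0) F x = upperHull F P x := by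
  have hbdd : ∀ z ∈ Ici (0 : ℝ), |upperHull F P z| ≤ max |F 0| |F (hullVertex F P P.card)| :=
    fun z hz => abs_le_max_abs_abs ((hF hz).trans (le_upperHull hF hjump hz))
      ((upperHull_le_hullChord le_rfl z).trans (hullChord_card z).le)
  refine IsLeast.csInf_eq ⟨⟨upperHull F P, concaveOn_upperHull.subset (subset_univ _)
    (convex_Ici 0), ⟨_, hbdd⟩, fun z hz => le_upperHull hF hjump hz, rfl⟩, ?_⟩
  rintro y ⟨η, hη, -, hFη, rfl⟩
  exact upperHull_le_of_concaveOn hF hjump hη hFη hx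

lemma derivWithin_lcmOn_eq_hullSlope (hF : Monotone F) (hjump : JumpsOnlyAt F P) {k : ℕ}
    (hk : k ≤ P.card) {x : ℝ} (hx : x ∈ Ioc (hullVertex F P k) (hullVertex F P (k + 1))) :
    derivWithin (lcmOn (Ici 0) F) (Iio x) x = hullSlope F P k :=
  derivWithin_Iio_eq_of_eqOn hx.1 (fun _ hy =>
    (lcmOn_Ici_eq_upperHull hF hjump ((hullVertex_nonneg k).trans hy.1.le)).trans
      (upperHull_eq_hullChord hF hk ⟨hy.1.le, hy.2.trans hx.2⟩)) (hasDerivAt_hullChord k x)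

lemma derivWithin_lcmOn_eq_zero (hF : Monotone F) (hjump : JumpsOnlyAt F P) {x : ℝ}
    (hx : hullVertex F P P.card < x) : derivWithin (lcmOn (Ici 0) F) (Iio x) x = 0 :=
  derivWithin_Iio_eq_of_eqOn hx (fun _ hy =>
    (lcmOn_Ici_eq_upperHull hF hjump ((hullVertex_nonneg _).trans hy.1.le)).trans
      (upperHull_eq_of_hullVertex_card_le hF hy.1.le)) (hasDerivAt_const x _)

end JumpsOnlyAt

lemma empCDF_sub_empCDF (X : ℕ → ℝ) (n : ℕ) {a b : ℝ} (hab : a ≤ b) :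
    empCDF X n b - empCDF X n a =
      (n : ℝ)⁻¹ * ∑ i ∈ Finset.range n, (Ioc a b).indicator 1 (X i) := by
  rw [empCDF, empCDF, ← mul_sub, ← Finset.sum_sub_distrib]
  congr 1
  refine Finset.sum_congr rfl fun i _ => ?_
  rcases le_or_gt (X i) a with ha | ha
  · simp [ha, ha.trans hab]
  · simp [indicator_apply, ha, not_le.2 ha]

lemma monotone_empCDF (X : ℕ → ℝ) (n : ℕ) : Monotone (empCDF X n) := fun a b hab => by
  rw [← sub_nonneg, empCDF_sub_empCDF X n hab]
  exact mul_nonneg (by positivity)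
    (Finset.sum_nonneg fun _ _ => indicator_nonneg (fun _ _ => zero_le_one) _)

lemma jumpsOnlyAt_empCDF (X : ℕ → ℝ) (n : ℕ) :
    JumpsOnlyAt (empCDF X n) ((Finset.range n).image X) := fun a b hab h => by
  rw [← sub_eq_zero, empCDF_sub_empCDF X n hab, Finset.sum_eq_zero fun i hi =>
    indicator_of_notMem (h _ (Finset.mem_image_of_mem X hi)) _, mul_zero]

lemma sum_mul_empCDF_sub_eq_of_eqOn_Ioc {τ : ℕ → ℝ} (hτ : Monotone τ) {N : ℕ} {Φ : ℝ → ℝ}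
    {a : ℕ → ℝ} (hpiece : ∀ k < N, EqOn Φ (fun _ => a k) (Ioc (τ k) (τ (k + 1))))
    {X : ℕ → ℝ} {n : ℕ} (hX : ∀ i < n, X i ∈ Ioc (τ 0) (τ N)) :
    ∑ k ∈ Finset.range N, a k * (empCDF X n (τ (k + 1)) - empCDF X n (τ k)) =
      (n : ℝ)⁻¹ * ∑ i ∈ Finset.range n, Φ (X i) := by
  calc ∑ k ∈ Finset.range N, a k * (empCDF X n (τ (k + 1)) - empCDF X n (τ k))
      = (n : ℝ)⁻¹ * ∑ i ∈ Finset.range n, ∑ k ∈ Finset.range N,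
          (Ioc (τ k) (τ (k + 1))).indicator (fun _ => a k) (X i) := by
        rw [Finset.sum_comm, Finset.mul_sum]
        refine Finset.sum_congr rfl fun k _ => ?_
        rw [empCDF_sub_empCDF X n (hτ k.le_succ), Finset.mul_sum, Finset.mul_sum,
          Finset.mul_sum]
        refine Finset.sum_congr rfl fun i _ => ?_
        simp only [indicator_apply, Pi.one_apply]
        split_ifs <;> ring
    _ = (n : ℝ)⁻¹ * ∑ i ∈ Finset.range n, Φ (X i) := by
        congr 1
        refine Finset.sum_congr rfl fun i hi => ?_
        rw [sum_indicator_Ioc_eq_indicator hτ hpiece,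
          indicator_of_mem (hX i (Finset.mem_range.1 hi))]

theorem plugin_eq_empirical_general
    (n : ℕ) (X : ℕ → ℝ)
    (hpos : ∀ i < n, 0 < X i)
    (h : ℝ → ℝ) :
    ∫ x in Ici (0:ℝ), h (grenander X n x) * grenander X n x =
      (n : ℝ)⁻¹ * ∑ i ∈ Finset.range n, h (grenander X n (X i)) := by
  set P := (Finset.range n).image X
  set τ := hullVertex (empCDF X n) P
  set c := hullSlope (empCDF X n) P
  have hF := monotone_empCDF X n
  have hjump := jumpsOnlyAt_empCDF X n
  have hgren : ∀ k < P.card, EqOn (grenander X n) (fun _ => c k) (Ioc (τ k) (τ (k + 1))) :=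
    fun k hk x hx => derivWithin_lcmOn_eq_hullSlope hF hjump hk.le hx
  calc ∫ x in Ici (0:ℝ), h (grenander X n x) * grenander X n x
      = ∑ k ∈ Finset.range P.card, (τ (k + 1) - τ k) * (h (c k) * c k) := by
        rw [integral_Ici_eq_integral_Ioi]
        refine integral_Ioi_eq_sum_of_eqOn_Ioc monotone_hullVertex
          (fun k hk x hx => by simp only [hgren k hk hx]) fun x hx => ?_
        simp only [grenander, lcmCDF, derivWithin_lcmOn_eq_zero hF hjump hx, mul_zero,
          Pi.zero_apply]
    _ = ∑ k ∈ Finset.range P.card, h (c k) * (empCDF X n (τ (k + 1)) - empCDF X n (τ k)) := by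
        refine Finset.sum_congr rfl fun k _ => ?_
        rw [← sub_mul_hullSlope]
        ring
    _ = (n : ℝ)⁻¹ * ∑ i ∈ Finset.range n, h (grenander X n (X i)) :=
        sum_mul_empCDF_sub_eq_of_eqOn_Ioc monotone_hullVertex (Φ := (h <| grenander X n ·))
          (fun k hk x hx => by simp only [hgren k hk hx]) fun i hi =>
            ⟨hpos i hi, le_hullVertex_card (Finset.mem_image_of_mem X (Finset.mem_range.2 hi))⟩

/-- Lemma `lem:Basic`: for distinct data points in `(0,∞)` and any
`h : ℝ → ℝ`, the Grenander plug-in estimator `∫₀^∞ h(f̂ₙ(x)) f̂ₙ(x) dx` equals the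
empirical-measure estimator `n⁻¹ ∑ᵢ h(f̂ₙ(Xᵢ))`. -/
theorem plugin_eq_empirical
    (n : ℕ) (hn : 0 < n) (X : ℕ → ℝ)
    (hpos : ∀ i < n, 0 < X i)
    (hdist : ∀ i < n, ∀ j < n, i ≠ j → X i ≠ X j)
    (h : ℝ → ℝ) :
    ∫ x in Ici (0:ℝ), h (grenander X n x) * grenander X n x =
      (n : ℝ)⁻¹ * ∑ i ∈ Finset.range n, h (grenander X n (X i)) :=
  plugin_eq_empirical_general n X hpos h
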